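/- arXiv:math/0111086 — 2 statements merged into one kernel-verified Lean document; each statement's English description precedes it below -/
import Mathlib

section
/- For every Schwartz function φ on ℝⁿ, the function f(x) := (2π)^{−n} ∫_C (𝓕φ)(ζ) e^{−i⟨x,ζ⟩} dμ(ζ) is well defined and bounded, the integral ∫_{ℝⁿ} f(x) \overline{φ(x)} dx converges absolutely, and ∫_{ℝⁿ} f(x) \overline{φ(x)} dx = (2π)^{−n} ∫_C |(𝓕φ)(ζ)|² dμ(ζ). In particular the Hermitian form (f,f)_N := ∫_{ℝⁿ} f \overline{φ} dx is nonnegative, and it vanishes if and only if 𝓕φ vanishes μ-almost everywhere on C. -/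
open MeasureTheory Metric Set ComplexConjugate
open scoped ENNReal Real

noncomputable section

/-- Signature coefficients of the quadratic form of signature `(p-1, q-1)`. -/
def sgnc (p : ℕ) {m : ℕ} (i : Fin m) : ℝ := if (i : ℕ) < p - 1 then 1 else -1

/-- The quadratic form `Q(ζ) = ζ₁²+⋯+ζ_{p−1}² − ζ_p² − ⋯ − ζ_n²`. -/
def Qform (p : ℕ) {m : ℕ} (ζ : Fin m → ℝ) : ℝ := ∑ i, sgnc p i * ζ i ^ 2

/-- The null cone `C = {ζ ≠ 0 : Q(ζ) = 0}`. -/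
def coneSet (p m : ℕ) : Set (Fin m → ℝ) := {ζ | ζ ≠ 0 ∧ Qform p ζ = 0}

/-- Euclidean dot product on `ℝⁿ`. -/
def dotp {m : ℕ} (z ζ : Fin m → ℝ) : ℝ := ∑ i, z i * ζ i

/-- Euclidean norm on `ℝⁿ`. -/
def enorm' {m : ℕ} (ζ : Fin m → ℝ) : ℝ := Real.sqrt (∑ i, ζ i ^ 2)

/-- The polar parametrization `(s, ω, ω′) ↦ (sω, sω′)` of the null cone. -/
def polarMap (p q : ℕ)
    (x : ℝ × (sphere (0 : EuclideanSpace ℝ (Fin (p - 1))) 1 ×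
              sphere (0 : EuclideanSpace ℝ (Fin (q - 1))) 1)) :
    Fin (p + q - 2) → ℝ := fun i =>
  if h : (i : ℕ) < p - 1 then x.1 * (x.2.1 : EuclideanSpace ℝ (Fin (p - 1))) ⟨i, h⟩
  else if h' : (i : ℕ) - (p - 1) < q - 1 then
    x.1 * (x.2.2 : EuclideanSpace ℝ (Fin (q - 1))) ⟨(i : ℕ) - (p - 1), h'⟩
  else 0

/-- The measure `μ = δ(Q)` on the null cone, defined by
`∫_C φ dμ = (1/2)∫₀^∞ ∫_{S^{p−2}} ∫_{S^{q−2}} φ(sω, sω′) s^{n−3} dω dω′ ds`. -/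
def coneMeasure (p q : ℕ) : Measure (Fin (p + q - 2) → ℝ) :=
  (2 : ℝ≥0∞)⁻¹ •
    Measure.map (polarMap p q)
      ((((volume : Measure ℝ).restrict (Ioi 0)).withDensity
          fun s => ENNReal.ofReal (s ^ (p + q - 5))).prod
        ((Measure.toSphere (volume : Measure (EuclideanSpace ℝ (Fin (p - 1))))).prod
          (Measure.toSphere (volume : Measure (EuclideanSpace ℝ (Fin (q - 1)))))))

/-- Fourier transform, normalized `(𝓕φ)(ζ) = ∫ φ(z) e^{i⟨z,ζ⟩} dz`. -/
def FT {m : ℕ} (φ : (Fin m → ℝ) → ℂ) (ζ : Fin m → ℝ) : ℂ :=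
  ∫ z, Complex.exp (Complex.I * (dotp z ζ : ℝ)) * φ z

-- ## auxiliary lemmas

open FourierTransform RealInnerProductSpace SchwartzMap in
/-- The Fourier transform `FT` of a Schwartz map, expressed through the mathlib
Fourier transform on Euclidean space. -/
lemma FT_eq_schwartz {m : ℕ} (φ : SchwartzMap (Fin m → ℝ) ℂ) (ζ : Fin m → ℝ) :
    FT (fun z => φ z) ζ =
      (fourierTransformCLM ℂ
          (compCLMOfContinuousLinearEquiv ℂ (EuclideanSpace.equiv (Fin m) ℝ) φ))
        (-(2 * Real.pi)⁻¹ • (EuclideanSpace.equiv (Fin m) ℝ).symm ζ) := by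
  have hπ : (2 * Real.pi) ≠ 0 := by positivity
  set ξ : EuclideanSpace ℝ (Fin m) := -(2 * Real.pi)⁻¹ • (EuclideanSpace.equiv (Fin m) ℝ).symm ζ
    with hξ
  rw [SchwartzMap.fourierTransformCLM_apply, SchwartzMap.fourier_coe, Real.fourier_eq']
  rw [FT, ← (EuclideanSpace.volume_preserving_symm_measurableEquiv_toLp (Fin m)).integral_comp
        (MeasurableEquiv.measurableEmbedding _)
        (fun z => Complex.exp (Complex.I * (dotp z ζ : ℝ)) * φ z)]
  refine integral_congr_ae (Filter.Eventually.of_forall fun w => ?_)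
  have hinner0 : (inner ℝ w ((EuclideanSpace.equiv (Fin m) ℝ).symm ζ) : ℝ)
      = dotp ((MeasurableEquiv.toLp 2 (Fin m → ℝ)).symm w) ζ := by
    simp only [PiLp.inner_apply, RCLike.inner_apply, conj_trivial, dotp]
    exact Finset.sum_congr rfl fun i _ => mul_comm _ _
  have hinner : (inner ℝ w ξ : ℝ)
      = -(2 * Real.pi)⁻¹ * dotp ((MeasurableEquiv.toLp 2 (Fin m → ℝ)).symm w) ζ := by
    rw [hξ, real_inner_smul_right, hinner0]
  have harg : (↑(-2 * Real.pi * (inner ℝ w ξ : ℝ)) : ℂ) * Complex.I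
      = Complex.I * ((dotp ((MeasurableEquiv.toLp 2 (Fin m → ℝ)).symm w) ζ : ℝ) : ℂ) := by
    rw [hinner]
    rw [show -2 * Real.pi * (-(2 * Real.pi)⁻¹ *
          dotp ((MeasurableEquiv.toLp 2 (Fin m → ℝ)).symm w) ζ)
        = dotp ((MeasurableEquiv.toLp 2 (Fin m → ℝ)).symm w) ζ by field_simp]
    ring
  have hφeq : ((compCLMOfContinuousLinearEquiv ℂ (EuclideanSpace.equiv (Fin m) ℝ)) φ) w
      = φ ((MeasurableEquiv.toLp 2 (Fin m → ℝ)).symm w) := by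
    simp only [SchwartzMap.compCLMOfContinuousLinearEquiv_apply]
    rfl
  show Complex.exp (Complex.I * (dotp ((MeasurableEquiv.toLp 2 (Fin m → ℝ)).symm w) ζ : ℝ)) *
      φ ((MeasurableEquiv.toLp 2 (Fin m → ℝ)).symm w)
    = Complex.exp ((↑(-2 * Real.pi * (inner ℝ w ξ : ℝ)) : ℂ) * Complex.I) •
      ((compCLMOfContinuousLinearEquiv ℂ (EuclideanSpace.equiv (Fin m) ℝ)) φ) w
  rw [harg, smul_eq_mul, hφeq]

/-- Polynomial decay of a Schwartz function. -/
lemma schwartz_decay {m : ℕ} (g : SchwartzMap (EuclideanSpace ℝ (Fin m)) ℂ) (K : ℕ) :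
    ∃ C : ℝ, 0 ≤ C ∧ ∀ ξ, (1 + ‖ξ‖) ^ K * ‖g ξ‖ ≤ C := by
  refine ⟨2 ^ K * ((Finset.Iic (K, 0)).sup (fun m' => SchwartzMap.seminorm ℝ m'.1 m'.2)) g,
    ?_, fun ξ => ?_⟩
  · exact mul_nonneg (by positivity) (apply_nonneg _ g)
  · have := SchwartzMap.one_add_le_sup_seminorm_apply (𝕜 := ℝ) (m := (K, 0))
      (k := K) (n := 0) le_rfl le_rfl g ξ
    simpa [norm_iteratedFDeriv_zero] using this

lemma continuous_polarMap (p q : ℕ) : Continuous (polarMap p q) := by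
  apply continuous_pi
  intro i
  unfold polarMap
  by_cases h : (i : ℕ) < p - 1
  · simp only [dif_pos h]
    exact continuous_fst.mul ((EuclideanSpace.proj (⟨i, h⟩ : Fin (p-1))).continuous.comp
      (continuous_subtype_val.comp (continuous_fst.comp continuous_snd)))
  · simp only [dif_neg h]
    by_cases h' : (i : ℕ) - (p - 1) < q - 1
    · simp only [dif_pos h']
      exact continuous_fst.mul ((EuclideanSpace.proj (⟨(i : ℕ) - (p-1), h'⟩ : Fin (q-1))).continuous.comp
        (continuous_subtype_val.comp (continuous_snd.comp continuous_snd)))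
    · simp only [dif_neg h']
      exact continuous_const

/-- On the cone, the Euclidean norm dominates the radial parameter. -/
lemma polar_radius_le (p q : ℕ) (hp : 2 ≤ p) (hq : 2 ≤ q)
    (x : ℝ × (sphere (0 : EuclideanSpace ℝ (Fin (p - 1))) 1 ×
              sphere (0 : EuclideanSpace ℝ (Fin (q - 1))) 1)) (hx : 0 ≤ x.1) :
    x.1 ≤ Real.sqrt (∑ i, (polarMap p q x i) ^ 2) := by
  have hle : p - 1 ≤ p + q - 2 := by omega
  have hω : ∑ j : Fin (p-1), ((x.2.1 : EuclideanSpace ℝ (Fin (p-1))) j) ^ 2 = 1 := by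
    have hn : ‖(x.2.1 : EuclideanSpace ℝ (Fin (p-1)))‖ = 1 :=
      mem_sphere_zero_iff_norm.mp x.2.1.2
    rw [EuclideanSpace.norm_eq] at hn
    have := Real.sqrt_eq_one.mp hn
    simpa [Real.norm_eq_abs, sq_abs] using this
  have key : ∑ j : Fin (p-1), (polarMap p q x (Fin.castLE hle j)) ^ 2 = x.1 ^ 2 := by
    have : ∀ j : Fin (p-1), polarMap p q x (Fin.castLE hle j)
        = x.1 * (x.2.1 : EuclideanSpace ℝ (Fin (p-1))) j := by
      intro j
      have hj : ((Fin.castLE hle j : Fin (p+q-2)) : ℕ) < p - 1 := j.2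
      simp only [polarMap, dif_pos hj]
      congr 1
    simp_rw [this, mul_pow, ← Finset.mul_sum, hω, mul_one]
  have h1 : x.1 ^ 2 ≤ ∑ i, polarMap p q x i ^ 2 := by
    rw [← key]
    have := Finset.sum_map (Finset.univ : Finset (Fin (p-1))) (Fin.castLEEmb hle)
      (fun i => polarMap p q x i ^ 2)
    rw [show ∑ j : Fin (p-1), (polarMap p q x (Fin.castLE hle j)) ^ 2
        = ∑ i ∈ (Finset.univ : Finset (Fin (p-1))).map (Fin.castLEEmb hle),
            polarMap p q x i ^ 2 from this.symm]
    exact Finset.sum_le_sum_of_subset_of_nonneg (Finset.subset_univ _)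
      (fun _ _ _ => sq_nonneg _)
  calc x.1 = Real.sqrt (x.1 ^ 2) := (Real.sqrt_sq hx).symm
    _ ≤ _ := Real.sqrt_le_sqrt h1

set_option synthInstance.maxHeartbeats 1000000 in
instance coneMeasure_sfinite (p q : ℕ) : SFinite (coneMeasure p q) := by
  unfold coneMeasure; infer_instance

/-- Master integrability lemma for the cone measure. -/
lemma integrable_coneMeasure (p q : ℕ) (hp : 2 ≤ p) (hq : 2 ≤ q)
    {F : Type*} [NormedAddCommGroup F] (g : (Fin (p + q - 2) → ℝ) → F) (hg : Continuous g)
    (C : ℝ)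
    (hC : ∀ x : ℝ × (sphere (0 : EuclideanSpace ℝ (Fin (p - 1))) 1 ×
              sphere (0 : EuclideanSpace ℝ (Fin (q - 1))) 1), 0 ≤ x.1 →
            ‖g (polarMap p q x)‖ ≤ C * ((1 + x.1) ^ (p + q))⁻¹) :
    Integrable g (coneMeasure p q) := by
  unfold coneMeasure
  set ν1 : Measure ℝ := ((volume : Measure ℝ).restrict (Ioi 0)).withDensity
      fun s => ENNReal.ofReal (s ^ (p + q - 5)) with hν1
  set σ := (Measure.toSphere (volume : Measure (EuclideanSpace ℝ (Fin (p - 1))))).prod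
      (Measure.toSphere (volume : Measure (EuclideanSpace ℝ (Fin (q - 1))))) with hσ
  refine Integrable.smul_measure ?_ (by norm_num)
  rw [integrable_map_measure hg.aestronglyMeasurable (continuous_polarMap p q).aemeasurable]
  -- a.e. positivity of the radial coordinate
  have h0 : ν1 {s : ℝ | ¬ (0:ℝ) < s} = 0 := by
    refine withDensity_absolutelyContinuous _ _ ?_
    have : {s : ℝ | ¬ (0:ℝ) < s} = Iic 0 := by ext s; simp [not_lt]
    rw [this, Measure.restrict_apply measurableSet_Iic]
    simp [Set.Iic_inter_Ioi]
  have hae : ∀ᵐ z ∂(ν1.prod σ), 0 < z.1 := by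
    rw [MeasureTheory.ae_iff]
    have hset : {z : ℝ × _ | ¬ 0 < z.1} = {s : ℝ | ¬ (0:ℝ) < s} ×ˢ (univ : Set ((sphere (0 : EuclideanSpace ℝ (Fin (p - 1))) 1) × (sphere (0 : EuclideanSpace ℝ (Fin (q - 1))) 1))) := by
      ext z; simp
    rw [hset, Measure.prod_prod, h0, zero_mul]
  -- the dominating radial function
  have hbase : Integrable (fun s : ℝ => C * ((1 + s) ^ (p + q))⁻¹) ν1 := by
    rw [hν1, integrable_withDensity_iff ((measurable_id'.pow_const _).ennreal_ofReal)
      (Filter.Eventually.of_forall fun s => ENNReal.ofReal_lt_top)]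
    refine Integrable.mono' (((integrable_inv_one_add_sq).const_mul |C|).restrict (s := Ioi 0))
      ?_ ?_
    · exact ((measurable_const.mul
        (((measurable_const.add measurable_id).pow_const _).inv)).mul
        ((measurable_id'.pow_const _).ennreal_ofReal.ennreal_toReal)).aestronglyMeasurable
    · filter_upwards [ae_restrict_mem measurableSet_Ioi] with s hs
      have hs0 : (0:ℝ) < s := hs
      have h1s : (0:ℝ) < 1 + s := by linarith
      rw [ENNReal.toReal_ofReal (by positivity)]
      rw [norm_mul, norm_mul, Real.norm_eq_abs, Real.norm_eq_abs, Real.norm_eq_abs]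
      rw [abs_of_nonneg (by positivity : (0:ℝ) ≤ ((1+s)^(p+q))⁻¹),
        abs_of_nonneg (by positivity : (0:ℝ) ≤ s ^ (p+q-5))]
      rw [mul_assoc]
      refine mul_le_mul_of_nonneg_left ?_ (abs_nonneg C)
      -- ((1+s)^(p+q))⁻¹ * s^(p+q-5) ≤ (1+s^2)⁻¹
      have he : (p + q - 5) + (p + q - (p + q - 5)) = p + q := by omega
      have ht2 : 2 ≤ p + q - (p + q - 5) := by omega
      have hse : s ^ (p+q-5) ≤ (1+s) ^ (p+q-5) := by
        exact pow_le_pow_left₀ hs0.le (by linarith) _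
      have hsplit : (1+s) ^ (p+q) = (1+s) ^ (p+q-5) * (1+s) ^ (p + q - (p+q-5)) := by
        rw [← pow_add, he]
      have hlow : (1 + s^2) ≤ (1+s) ^ (p + q - (p+q-5)) := by
        calc (1 + s^2) ≤ (1+s)^2 := by nlinarith
          _ ≤ (1+s) ^ (p + q - (p+q-5)) := pow_le_pow_right₀ (by linarith) ht2
      calc ((1+s)^(p+q))⁻¹ * s^(p+q-5)
          ≤ ((1+s)^(p+q))⁻¹ * (1+s)^(p+q-5) := by
            exact mul_le_mul_of_nonneg_left hse (by positivity)
        _ = ((1+s) ^ (p + q - (p+q-5)))⁻¹ := by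
            rw [hsplit, mul_inv, mul_comm (((1+s) ^ (p+q-5))⁻¹), mul_assoc,
              inv_mul_cancel₀ (by positivity : ((1:ℝ)+s) ^ (p+q-5) ≠ 0), mul_one]
        _ ≤ (1 + s^2)⁻¹ := by
            exact inv_anti₀ (by positivity) hlow
  have hint : Integrable (fun z : ℝ ×
      (sphere (0 : EuclideanSpace ℝ (Fin (p - 1))) 1 ×
       sphere (0 : EuclideanSpace ℝ (Fin (q - 1))) 1) =>
      (C * ((1 + z.1) ^ (p + q))⁻¹) * (1:ℝ)) (ν1.prod σ) :=
    hbase.mul_prod (integrable_const 1)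
  simp only [mul_one] at hint
  refine Integrable.mono' hint (hg.comp (continuous_polarMap p q)).aestronglyMeasurable ?_
  filter_upwards [hae] with z hz
  exact hC z hz.le

lemma mul_conj_norm_sq (z : ℂ) : z * conj z = ((‖z‖^2 : ℝ) : ℂ) := by
  rw [Complex.mul_conj, Complex.normSq_eq_norm_sq]

lemma norm_exp_neg_I_mul (r : ℝ) : ‖Complex.exp (-Complex.I * (r : ℂ))‖ = 1 := by
  rw [Complex.norm_exp]
  simp [Complex.mul_re]


open SchwartzMap

set_option maxHeartbeats 1000000

/-- For every Schwartz function `φ` on `ℝⁿ`, the function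
`f(x) = (2π)^{−n} ∫_C (𝓕φ)(ζ) e^{−i⟨x,ζ⟩} dμ(ζ)` is well defined and bounded, the pairing
`∫ f(x) conj(φ(x)) dx` converges absolutely and equals `(2π)^{−n} ∫_C |𝓕φ|² dμ`; in particular
the Hermitian form `(f,f)_N` is nonnegative, and vanishes iff `𝓕φ = 0` μ-a.e. on `C`. -/
theorem statement0 (p q : ℕ) (hp : 2 ≤ p) (hq : 2 ≤ q) (hn : 2 < p + q - 2)
    (φ : SchwartzMap (Fin (p + q - 2) → ℝ) ℂ) :
    let f : (Fin (p + q - 2) → ℝ) → ℂ := fun x =>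
      ((((2 * Real.pi) ^ (p + q - 2) : ℝ)⁻¹ : ℝ) : ℂ) *
        ∫ ζ, FT (fun z => φ z) ζ * Complex.exp (-Complex.I * (dotp x ζ : ℝ)) ∂coneMeasure p q
    let N : ℂ := ∫ x, f x * conj (φ x)
    (∀ x : Fin (p + q - 2) → ℝ,
      Integrable (fun ζ => FT (fun z => φ z) ζ * Complex.exp (-Complex.I * (dotp x ζ : ℝ)))
        (coneMeasure p q)) ∧
    (∃ M : ℝ, ∀ x : Fin (p + q - 2) → ℝ, ‖f x‖ ≤ M) ∧
    Integrable (fun x => f x * conj (φ x)) volume ∧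
    N = ((((2 * Real.pi) ^ (p + q - 2) : ℝ)⁻¹ : ℝ) : ℂ) *
        ((∫ ζ, ‖FT (fun z => φ z) ζ‖ ^ 2 ∂coneMeasure p q : ℝ) : ℂ) ∧
    N.im = 0 ∧ 0 ≤ N.re ∧
    (N = 0 ↔ ∀ᵐ ζ ∂coneMeasure p q, FT (fun z => φ z) ζ = 0) := by
  intro f N
  set c : ℝ := ((2 * Real.pi) ^ (p + q - 2) : ℝ)⁻¹ with hc
  have hc0 : 0 < c := by rw [hc]; positivity
  set G : (Fin (p + q - 2) → ℝ) → ℂ := FT (fun z => φ z) with hG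
  set μC := coneMeasure p q with hμC
  set Φ := fourierTransformCLM ℂ
      (compCLMOfContinuousLinearEquiv ℂ (EuclideanSpace.equiv (Fin (p + q - 2)) ℝ) φ) with hΦ
  have hGeq : ∀ ζ, G ζ = Φ (-(2 * Real.pi)⁻¹ • (EuclideanSpace.equiv (Fin (p + q - 2)) ℝ).symm ζ) :=
    fun ζ => FT_eq_schwartz φ ζ
  have hGcont : Continuous G := by
    have : G = fun ζ => Φ (-(2 * Real.pi)⁻¹ • (EuclideanSpace.equiv (Fin (p + q - 2)) ℝ).symm ζ) :=
      funext hGeq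
    rw [this]
    exact Φ.continuous.comp (by fun_prop)
  obtain ⟨C, hC0, hCd⟩ := schwartz_decay Φ (p + q)
  have hGbd : ∀ ζ, ‖G ζ‖ ≤ C := by
    intro ζ
    set ξ := -(2 * Real.pi)⁻¹ • (EuclideanSpace.equiv (Fin (p + q - 2)) ℝ).symm ζ
    calc ‖G ζ‖ = 1 * ‖Φ ξ‖ := by rw [hGeq ζ, one_mul]
      _ ≤ (1 + ‖ξ‖) ^ (p + q) * ‖Φ ξ‖ := by
          refine mul_le_mul_of_nonneg_right ?_ (norm_nonneg _)
          exact one_le_pow₀ (by linarith [norm_nonneg ξ])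
      _ ≤ C := hCd ξ
  -- decay along the cone
  have hKbd : ∀ x : ℝ × (sphere (0 : EuclideanSpace ℝ (Fin (p - 1))) 1 ×
        sphere (0 : EuclideanSpace ℝ (Fin (q - 1))) 1), 0 ≤ x.1 →
      ‖G (polarMap p q x)‖ ≤ (C * (2 * Real.pi) ^ (p + q)) * ((1 + x.1) ^ (p + q))⁻¹ := by
    intro x hx
    set ζ := polarMap p q x with hζ
    set ξ := -(2 * Real.pi)⁻¹ • (EuclideanSpace.equiv (Fin (p + q - 2)) ℝ).symm ζ with hξ
    have hπ : (0:ℝ) < 2 * Real.pi := by positivity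
    have hEnorm : ‖(EuclideanSpace.equiv (Fin (p + q - 2)) ℝ).symm ζ‖
        = Real.sqrt (∑ i, ζ i ^ 2) := by
      rw [EuclideanSpace.norm_eq]
      congr 1
      refine Finset.sum_congr rfl fun i _ => ?_
      have : ((EuclideanSpace.equiv (Fin (p + q - 2)) ℝ).symm ζ) i = ζ i := rfl
      rw [this, Real.norm_eq_abs, sq_abs]
    have hnorm : ‖ξ‖ = (2 * Real.pi)⁻¹ * Real.sqrt (∑ i, ζ i ^ 2) := by
      rw [hξ, norm_smul, Real.norm_eq_abs, abs_neg, abs_of_pos (by positivity), hEnorm]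
    have hrad : x.1 ≤ Real.sqrt (∑ i, ζ i ^ 2) := polar_radius_le p q hp hq x hx
    have hA2 : (1 + x.1) / (2 * Real.pi) ≤ 1 + ‖ξ‖ := by
      rw [hnorm]
      have h2π : (1:ℝ) ≤ 2 * Real.pi := by nlinarith [Real.pi_gt_three]
      have : (1 + x.1) / (2 * Real.pi) = (2 * Real.pi)⁻¹ + (2 * Real.pi)⁻¹ * x.1 := by
        field_simp
      rw [this]
      have h1 : (2 * Real.pi)⁻¹ ≤ 1 := by
        rw [inv_le_one_iff₀]; right; exact h2π
      have h2 : (2 * Real.pi)⁻¹ * x.1 ≤ (2 * Real.pi)⁻¹ * Real.sqrt (∑ i, ζ i ^ 2) :=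
        mul_le_mul_of_nonneg_left hrad (by positivity)
      linarith
    have hApos : (0:ℝ) < (1 + x.1) / (2 * Real.pi) := by positivity
    have h3 : ((1 + x.1) / (2 * Real.pi)) ^ (p + q) * ‖G ζ‖ ≤ C := by
      refine le_trans (mul_le_mul_of_nonneg_right
        (pow_le_pow_left₀ hApos.le hA2 _) (norm_nonneg _)) ?_
      rw [hGeq ζ]
      exact hCd ξ
    have h4 : ‖G ζ‖ ≤ C / ((1 + x.1) / (2 * Real.pi)) ^ (p + q) := by
      rw [le_div_iff₀ (by positivity)]
      linarith [h3]
    calc ‖G ζ‖ ≤ C / ((1 + x.1) / (2 * Real.pi)) ^ (p + q) := h4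
      _ = (C * (2 * Real.pi) ^ (p + q)) * ((1 + x.1) ^ (p + q))⁻¹ := by
          rw [div_pow, div_div_eq_mul_div, div_eq_mul_inv]
  -- integrability of G and of ‖G‖² on the cone
  have hG1 : Integrable G μC :=
    integrable_coneMeasure p q hp hq G hGcont (C * (2 * Real.pi) ^ (p + q)) hKbd
  have hGsq : Integrable (fun ζ => ‖G ζ‖ ^ 2) μC := by
    refine integrable_coneMeasure p q hp hq _ (hGcont.norm.pow 2)
      (C * (C * (2 * Real.pi) ^ (p + q))) ?_
    intro x hx
    rw [Real.norm_eq_abs, abs_of_nonneg (sq_nonneg _), sq]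
    calc ‖G (polarMap p q x)‖ * ‖G (polarMap p q x)‖
        ≤ C * ((C * (2 * Real.pi) ^ (p + q)) * ((1 + x.1) ^ (p + q))⁻¹) :=
          mul_le_mul (hGbd _) (hKbd x hx) (norm_nonneg _) hC0
      _ = (C * (C * (2 * Real.pi) ^ (p + q))) * ((1 + x.1) ^ (p + q))⁻¹ := by ring
  -- continuity of the oscillating factor
  have hdotCont : ∀ x : Fin (p + q - 2) → ℝ, Continuous fun ζ : Fin (p + q - 2) → ℝ =>
      Complex.exp (-Complex.I * ((dotp x ζ : ℝ) : ℂ)) := by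
    intro x
    refine Complex.continuous_exp.comp (continuous_const.mul
      (Complex.continuous_ofReal.comp ?_))
    unfold dotp
    exact continuous_finset_sum _ fun i _ => continuous_const.mul (continuous_apply i)
  -- (1) integrability of the defining integrand
  have hInt1 : ∀ x, Integrable
      (fun ζ => G ζ * Complex.exp (-Complex.I * ((dotp x ζ : ℝ) : ℂ))) μC := by
    intro x
    refine Integrable.mono' hG1.norm ((hGcont.mul (hdotCont x)).aestronglyMeasurable) ?_
    refine Filter.Eventually.of_forall fun ζ => ?_
    simp only [norm_mul, norm_exp_neg_I_mul, mul_one, le_refl]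
  have hfdef : ∀ x, f x = (c : ℂ) *
      ∫ ζ, G ζ * Complex.exp (-Complex.I * ((dotp x ζ : ℝ) : ℂ)) ∂μC := fun x => rfl
  -- (2) boundedness
  have hfbd : ∀ x, ‖f x‖ ≤ c * ∫ ζ, ‖G ζ‖ ∂μC := by
    intro x
    rw [hfdef x, norm_mul, Complex.norm_real, Real.norm_eq_abs, abs_of_pos hc0]
    refine mul_le_mul_of_nonneg_left ?_ hc0.le
    refine le_trans (norm_integral_le_integral_norm _) (le_of_eq ?_)
    refine integral_congr_ae (Filter.Eventually.of_forall fun ζ => ?_)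
    simp only [norm_mul, norm_exp_neg_I_mul, mul_one]
  -- (3) product integrability for Fubini
  have hFcont : Continuous (fun z : (Fin (p + q - 2) → ℝ) × (Fin (p + q - 2) → ℝ) =>
      G z.2 * Complex.exp (-Complex.I * ((dotp z.1 z.2 : ℝ) : ℂ)) * conj (φ z.1)) := by
    refine Continuous.mul (Continuous.mul (hGcont.comp continuous_snd) ?_) ?_
    · refine Complex.continuous_exp.comp (continuous_const.mul
        (Complex.continuous_ofReal.comp ?_))
      unfold dotp
      exact continuous_finset_sum _ fun i _ =>
        ((continuous_apply i).comp continuous_fst).mul ((continuous_apply i).comp continuous_snd)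
    · exact continuous_star.comp (φ.continuous.comp continuous_fst)
  have hFint : Integrable (fun z : (Fin (p + q - 2) → ℝ) × (Fin (p + q - 2) → ℝ) =>
      G z.2 * Complex.exp (-Complex.I * ((dotp z.1 z.2 : ℝ) : ℂ)) * conj (φ z.1))
      (volume.prod μC) := by
    have hdom : Integrable (fun z : (Fin (p + q - 2) → ℝ) × (Fin (p + q - 2) → ℝ) =>
        ‖φ z.1‖ * ‖G z.2‖) (volume.prod μC) := (φ.integrable.norm).mul_prod hG1.norm
    refine Integrable.mono' hdom hFcont.aestronglyMeasurable ?_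
    refine Filter.Eventually.of_forall fun z => ?_
    simp only [norm_mul, norm_exp_neg_I_mul, mul_one, RCLike.norm_conj]
    rw [mul_comm]
  -- pointwise identity for the pairing integrand
  have hfx : ∀ x, f x * conj (φ x) = (c : ℂ) *
      ∫ ζ, G ζ * Complex.exp (-Complex.I * ((dotp x ζ : ℝ) : ℂ)) * conj (φ x) ∂μC := by
    intro x
    rw [hfdef x, mul_assoc]
    congr 1
    exact (integral_mul_const _ _).symm
  -- (4) integrability of the pairing
  have hIntf : Integrable (fun x => f x * conj (φ x)) volume := by
    have h1 := hFint.integral_prod_left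
    exact (h1.const_mul (c : ℂ)).congr (Filter.Eventually.of_forall fun x => (hfx x).symm)
  -- conjugate of G
  have hconjG : ∀ ζ, conj (G ζ)
      = ∫ x, Complex.exp (-Complex.I * ((dotp x ζ : ℝ) : ℂ)) * conj (φ x) := by
    intro ζ
    rw [hG]
    show conj (FT (fun z => φ z) ζ) = _
    rw [FT, ← integral_conj]
    refine integral_congr_ae (Filter.Eventually.of_forall fun z => ?_)
    simp only [map_mul, ← Complex.exp_conj, Complex.conj_I, Complex.conj_ofReal, neg_mul]
  -- inner integral computation
  have hinner : ∀ ζ, (∫ x, G ζ * Complex.exp (-Complex.I * ((dotp x ζ : ℝ) : ℂ)) * conj (φ x))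
      = ((‖G ζ‖ ^ 2 : ℝ) : ℂ) := by
    intro ζ
    have : (fun x => G ζ * Complex.exp (-Complex.I * ((dotp x ζ : ℝ) : ℂ)) * conj (φ x))
        = fun x => G ζ * (Complex.exp (-Complex.I * ((dotp x ζ : ℝ) : ℂ)) * conj (φ x)) := by
      funext x; ring
    rw [this, integral_const_mul, ← hconjG ζ, mul_conj_norm_sq]
  -- (5) the value of N
  have hNval : N = (c : ℂ) * ((∫ ζ, ‖G ζ‖ ^ 2 ∂μC : ℝ) : ℂ) := by
    show (∫ x, f x * conj (φ x)) = _
    rw [show (fun x => f x * conj (φ x)) = fun x => (c : ℂ) *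
        ∫ ζ, G ζ * Complex.exp (-Complex.I * ((dotp x ζ : ℝ) : ℂ)) * conj (φ x) ∂μC from
      funext hfx]
    rw [integral_const_mul]
    congr 1
    rw [integral_integral_swap hFint]
    rw [show (fun ζ => ∫ x, G ζ * Complex.exp (-Complex.I * ((dotp x ζ : ℝ) : ℂ)) * conj (φ x))
        = fun ζ => ((‖G ζ‖ ^ 2 : ℝ) : ℂ) from funext hinner]
    exact integral_ofReal
  have hnn : (0:ℝ) ≤ ∫ ζ, ‖G ζ‖ ^ 2 ∂μC := integral_nonneg fun ζ => sq_nonneg _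
  have hNreal : N = ((c * ∫ ζ, ‖G ζ‖ ^ 2 ∂μC : ℝ) : ℂ) := by
    rw [hNval]; push_cast; ring
  refine ⟨hInt1, ⟨c * ∫ ζ, ‖G ζ‖ ∂μC, hfbd⟩, hIntf, hNval, ?_, ?_, ?_⟩
  · rw [hNreal]; exact Complex.ofReal_im _
  · rw [hNreal, Complex.ofReal_re]
    exact mul_nonneg hc0.le hnn
  · constructor
    · intro hN0
      rw [hNreal] at hN0
      have h1 := Complex.ofReal_eq_zero.mp hN0
      have h2 : ∫ ζ, ‖G ζ‖ ^ 2 ∂μC = 0 := by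
        rcases mul_eq_zero.mp h1 with h | h
        · exact absurd h (ne_of_gt hc0)
        · exact h
      have h3 := (integral_eq_zero_iff_of_nonneg (fun ζ => sq_nonneg ‖G ζ‖) hGsq).mp h2
      filter_upwards [h3] with ζ hζ
      have h4 : ‖G ζ‖ ^ 2 = 0 := hζ
      have h5 : ‖G ζ‖ = 0 := by nlinarith [norm_nonneg (G ζ)]
      exact norm_eq_zero.mp h5
    · intro hae0
      have h2 : ∫ ζ, ‖G ζ‖ ^ 2 ∂μC = 0 := by
        refine integral_eq_zero_of_ae ?_
        filter_upwards [hae0] with ζ h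
        have : G ζ = 0 := h
        simp [this]
      rw [hNreal, h2, mul_zero, Complex.ofReal_zero]


end
end

section
/- Let p ≡ q mod 2, p,q ≥ 2, n = p+q−2 > 2. Set ε = 1 if p−q ≡ 0 or 4 (mod 8) and ε = −1 if p−q ≡ 2 or 6 (mod 8); set δ = 1 if p−q ≡ 0 or 2 (mod 8) and δ = −1 if p−q ≡ 4 or 6 (mod 8). For y ∈ ℝ, y ≠ 0, define h(y) = e^{iπ(q−1)/2} y^{1−n/2} for y > 0 and h(y) = e^{iπ(q−1)/2} e^{iπ(1−n/2)} |y|^{1−n/2} for y < 0, and let χ_ε(sgn y) = 1 if ε = 1 and χ_ε(sgn y) = sgn y if ε = −1. Then for all y ≠ 0: |y|^{1−n/2} χ_ε(sgn y) / Γ((5−n−ε)/4) = δ · (Γ((n−1+ε)/4) / (2πi)) · (h(y) − conj(h(y))), with the convention that 1/Γ(x) = 0 when x is a nonpositive integer. -/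
open ComplexConjugate
open scoped Real

noncomputable section

lemma sin_pi_int_div_two (m : ℤ) :
    Real.sin (π * m / 2) =
      if m % 4 = 1 then 1 else if m % 4 = 3 then -1 else 0 := by
  obtain ⟨c, r, hr0, hr4, hm⟩ : ∃ c r : ℤ, 0 ≤ r ∧ r < 4 ∧ m = 4 * c + r :=
    ⟨m / 4, m % 4, Int.emod_nonneg m (by norm_num), Int.emod_lt_of_pos m (by norm_num),
      (Int.mul_ediv_add_emod m 4).symm⟩
  have key : π * (m : ℝ) / 2 = π * (r : ℝ) / 2 + (c : ℤ) * (2 * π) := by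
    rw [hm]; push_cast; ring
  rw [key, Real.sin_add_int_mul_two_pi]
  have hmr : m % 4 = r := by omega
  rw [hmr]
  interval_cases r
  · norm_num
  · norm_num [Real.sin_pi_div_two]
  · norm_num [Real.sin_pi]
  · have : π * (3:ℝ) / 2 = π / 2 + π := by ring
    norm_num [this, Real.sin_add_pi, Real.sin_pi_div_two]

lemma reflection' (x : ℝ) (hx : 0 < x) :
    1 / Real.Gamma (1 - x) = Real.Gamma x * Real.sin (π * x) / π := by
  rcases eq_or_ne (Real.sin (π * x)) 0 with h0 | h0
  · rw [h0, mul_zero, zero_div]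
    rw [Real.sin_eq_zero_iff] at h0
    obtain ⟨k, hk⟩ := h0
    have hxk : x = (k : ℝ) := by
      have hπ := Real.pi_ne_zero
      have : π * (k : ℝ) = π * x := by linarith [hk]
      exact (mul_left_cancel₀ hπ this).symm
    have hk1 : 1 ≤ k := by
      have : (0:ℝ) < (k:ℝ) := hxk ▸ hx
      exact_mod_cast this
    have hΓ : Real.Gamma (1 - x) = 0 := by
      rw [Real.Gamma_eq_zero_iff]
      refine ⟨(k - 1).toNat, ?_⟩
      rw [hxk]
      have : ((k - 1).toNat : ℝ) = (k : ℝ) - 1 := by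
        have := Int.toNat_of_nonneg (by omega : (0:ℤ) ≤ k - 1)
        exact_mod_cast congrArg (Int.cast : ℤ → ℝ) this
      rw [this]; ring
    rw [hΓ, div_zero]
  · have h1 := Real.Gamma_mul_Gamma_one_sub x
    rw [eq_div_iff h0] at h1
    have hΓ1 : Real.Gamma (1 - x) ≠ 0 := by
      intro hz
      rw [Real.Gamma_eq_zero_iff] at hz
      obtain ⟨m, hm⟩ := hz
      apply h0
      have hxm : x = (m : ℝ) + 1 := by linarith
      rw [hxm, show π * ((m : ℝ) + 1) = ((m + 1 : ℤ) : ℝ) * π by push_cast; ring,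
        Real.sin_int_mul_pi]
    have hπ := Real.pi_ne_zero
    field_simp
    rw [mul_comm π x] at h1
    linear_combination -h1

lemma key18 (p q : ℕ) (hpar : p % 2 = q % 2) (hn : 2 < p + q - 2) (ε δ χ : ℝ)
    (hε : ε = if ((p : ℤ) - (q : ℤ)) % 8 = 0 ∨ ((p : ℤ) - (q : ℤ)) % 8 = 4 then 1 else -1)
    (hδ : δ = if ((p : ℤ) - (q : ℤ)) % 8 = 0 ∨ ((p : ℤ) - (q : ℤ)) % 8 = 2 then 1 else -1)
    (t : ℤ)
    (hχt : (χ = 1 ∧ t = (q : ℤ) - 1) ∨ (χ = (if ε = 1 then 1 else -1) ∧ t = 3 - (p : ℤ))) :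
    χ / Real.Gamma ((5 - ((p:ℝ)+(q:ℝ)-2) - ε) / 4)
      = δ * Real.Gamma ((((p:ℝ)+(q:ℝ)-2) - 1 + ε) / 4) * Real.sin (π * (t:ℝ) / 2) / π := by
  have h6 : 6 ≤ p + q := by omega
  have h6R : (6:ℝ) ≤ (p:ℝ) + (q:ℝ) := by exact_mod_cast h6
  split_ifs at hε hδ with he hd hd <;> subst hε <;> subst hδ <;>
  first
  | -- ε = 1
    (obtain ⟨m, hm⟩ : ∃ m : ℤ, (p:ℤ) + q - 2 = 2 * m := ⟨((p:ℤ)+q-2)/2, by omega⟩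
     have hmR : (p:ℝ) + q - 2 = 2 * (m:ℝ) := by exact_mod_cast hm
     have hx0 : (0:ℝ) < ((p:ℝ)+(q:ℝ)-2 - 1 + 1) / 4 := by linarith
     rw [show (5 - ((p:ℝ)+(q:ℝ)-2) - 1) / 4
           = 1 - (((p:ℝ)+(q:ℝ)-2 - 1 + 1) / 4) from by ring,
       div_eq_mul_one_div, reflection' _ hx0,
       show π * (((p:ℝ)+(q:ℝ)-2 - 1 + 1) / 4) = π * (m:ℝ) / 2 from by
         rw [show (p:ℝ)+(q:ℝ)-2-1+1 = (p:ℝ)+q-2 from by ring, hmR]; ring,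
       sin_pi_int_div_two, sin_pi_int_div_two]
     norm_num at hχt
     rcases hχt with ⟨hχ, ht⟩ | ⟨hχ, ht⟩ <;> subst hχ <;> subst ht <;>
       split_ifs <;> first | ring1 | (exfalso; omega))
  | -- ε = -1
    (obtain ⟨m, hm⟩ : ∃ m : ℤ, (p:ℤ) + q - 4 = 2 * m := ⟨((p:ℤ)+q-4)/2, by omega⟩
     have hmR : (p:ℝ) + q - 4 = 2 * (m:ℝ) := by exact_mod_cast hm
     have hx0 : (0:ℝ) < ((p:ℝ)+(q:ℝ)-2 - 1 + -1) / 4 := by linarith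
     rw [show (5 - ((p:ℝ)+(q:ℝ)-2) - -1) / 4
           = 1 - (((p:ℝ)+(q:ℝ)-2 - 1 + -1) / 4) from by ring,
       div_eq_mul_one_div, reflection' _ hx0,
       show π * (((p:ℝ)+(q:ℝ)-2 - 1 + -1) / 4) = π * (m:ℝ) / 2 from by
         rw [show (p:ℝ)+(q:ℝ)-2-1+-1 = (p:ℝ)+q-4 from by ring, hmR]; ring,
       sin_pi_int_div_two, sin_pi_int_div_two]
     norm_num at hχt
     rcases hχt with ⟨hχ, ht⟩ | ⟨hχ, ht⟩ <;> subst hχ <;> subst ht <;>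
       split_ifs <;> first | ring1 | (exfalso; omega))

lemma exp_sub_conj (θ : ℝ) :
    Complex.exp ((θ:ℂ) * Complex.I) - conj (Complex.exp ((θ:ℂ) * Complex.I))
      = 2 * (Real.sin θ : ℂ) * Complex.I := by
  rw [← Complex.exp_conj, map_mul, Complex.conj_I, Complex.conj_ofReal, mul_neg, ← neg_mul,
    Complex.exp_mul_I, Complex.exp_mul_I, Complex.sin_neg, Complex.cos_neg,
    Complex.ofReal_sin]
  ring


/-- the pointwise identity expressing the normalized Riesz kernel
`ψ_{1−n/2,ε}(y) = |y|^{1−n/2} χ_ε(sgn y)/Γ((5−n−ε)/4)` as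
`δ (Γ((n−1+ε)/4)/2πi) (h(y) − conj h(y))` with
`h(y) = e^{iπ(q−1)/2}(y+i0)^{1−n/2}` (the convention `1/Γ = 0` at nonpositive integers holds
automatically for Mathlib's `Real.Gamma`, which vanishes there). -/
theorem statement18 (p q : ℕ) (hp : 2 ≤ p) (hq : 2 ≤ q) (hpar : p % 2 = q % 2)
    (hn : 2 < p + q - 2) (ε δ : ℝ)
    (hε : ε = if ((p : ℤ) - (q : ℤ)) % 8 = 0 ∨ ((p : ℤ) - (q : ℤ)) % 8 = 4 then 1 else -1)
    (hδ : δ = if ((p : ℤ) - (q : ℤ)) % 8 = 0 ∨ ((p : ℤ) - (q : ℤ)) % 8 = 2 then 1 else -1)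
    (y : ℝ) (hy : y ≠ 0) :
    let n : ℝ := (p : ℝ) + (q : ℝ) - 2
    let h : ℝ → ℂ := fun t =>
      if 0 < t then
        Complex.exp (Complex.I * (Real.pi * ((q : ℝ) - 1) / 2)) *
          ((t ^ ((1 : ℝ) - n / 2) : ℝ) : ℂ)
      else
        Complex.exp (Complex.I * (Real.pi * ((q : ℝ) - 1) / 2)) *
          Complex.exp (Complex.I * (Real.pi * (1 - n / 2))) *
          ((|t| ^ ((1 : ℝ) - n / 2) : ℝ) : ℂ)
    ((|y| ^ ((1 : ℝ) - n / 2) * (if ε = 1 then 1 else Real.sign y) /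
        Real.Gamma ((5 - n - ε) / 4) : ℝ) : ℂ)
      = ((δ : ℝ) : ℂ) * (((Real.Gamma ((n - 1 + ε) / 4) : ℝ) : ℂ) /
          (2 * (Real.pi : ℂ) * Complex.I)) * (h y - conj (h y)) := by
  intro n h
  simp only [n, h]
  have hπ : (π:ℝ) ≠ 0 := Real.pi_ne_zero
  rcases hy.lt_or_gt with hneg | hpos
  · -- y < 0
    rw [if_neg (not_lt.mpr hneg.le)]
    have hsgn : Real.sign y = -1 := Real.sign_of_neg hneg
    rw [hsgn]
    set a : ℝ := (1:ℝ) - ((p:ℝ) + (q:ℝ) - 2) / 2 with ha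
    set c : ℝ := |y| ^ a with hc
    set θ : ℝ := π * ((q:ℝ) - 1) / 2 + π * (1 - ((p:ℝ) + (q:ℝ) - 2) / 2) with hθ
    have e1 : Complex.exp (Complex.I * ((Real.pi : ℂ) * (((q:ℝ):ℂ) - 1) / 2)) *
        Complex.exp (Complex.I * ((Real.pi : ℂ) * (1 - (((p:ℝ)+(q:ℝ)-2 : ℝ):ℂ) / 2))) *
        (c:ℂ) = Complex.exp ((θ:ℂ) * Complex.I) * (c:ℂ) := by
      rw [← Complex.exp_add]
      congr 1
      push_cast [hθ]
      ring
    rw [e1]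
    have e2 : Complex.exp ((θ:ℂ) * Complex.I) * (c:ℂ) -
        conj (Complex.exp ((θ:ℂ) * Complex.I) * (c:ℂ))
        = (2 * (Real.sin θ : ℂ) * Complex.I) * (c:ℂ) := by
      rw [map_mul, Complex.conj_ofReal, ← sub_mul, exp_sub_conj]
    rw [e2]
    have hkey := key18 p q hpar hn ε δ (if ε = 1 then 1 else -1) hε hδ (3 - (p:ℤ))
      (Or.inr ⟨rfl, rfl⟩)
    have hθ3 : θ = π * ((3 - (p:ℤ) : ℤ) : ℝ) / 2 := by
      rw [hθ]; push_cast; ring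
    rw [← hθ3] at hkey
    rw [show ((δ:ℝ):ℂ) * ((Real.Gamma ((((p:ℝ)+(q:ℝ)-2) - 1 + ε) / 4) : ℂ) /
          (2 * (π:ℂ) * Complex.I)) * ((2 * (Real.sin θ : ℂ) * Complex.I) * (c:ℂ))
        = ((δ * Real.Gamma ((((p:ℝ)+(q:ℝ)-2) - 1 + ε) / 4) * Real.sin θ * c / π : ℝ) : ℂ) from by
      push_cast
      have h2 : (Real.pi : ℂ) ≠ 0 := by exact_mod_cast hπ
      field_simp]
    rw [Complex.ofReal_inj]
    calc c * (if ε = 1 then (1:ℝ) else -1) / Real.Gamma ((5 - ((p:ℝ)+(q:ℝ)-2) - ε) / 4)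
        = c * ((if ε = 1 then (1:ℝ) else -1) / Real.Gamma ((5 - ((p:ℝ)+(q:ℝ)-2) - ε) / 4)) := by
          ring
      _ = _ := by rw [hkey]; ring
  · -- 0 < y
    rw [if_pos hpos]
    have hsgn : (if ε = 1 then (1:ℝ) else Real.sign y) = 1 := by
      split_ifs
      · rfl
      · exact Real.sign_of_pos hpos
    rw [hsgn, abs_of_pos hpos]
    set a : ℝ := (1:ℝ) - ((p:ℝ) + (q:ℝ) - 2) / 2 with ha
    set c : ℝ := y ^ a with hc
    set θ : ℝ := π * ((q:ℝ) - 1) / 2 with hθ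
    have e1 : Complex.I * ((Real.pi : ℂ) * (((q:ℝ):ℂ) - 1) / 2) = (θ:ℂ) * Complex.I := by
      push_cast [hθ]; ring
    rw [e1]
    have e2 : Complex.exp ((θ:ℂ) * Complex.I) * (c:ℂ) -
        conj (Complex.exp ((θ:ℂ) * Complex.I) * (c:ℂ))
        = (2 * (Real.sin θ : ℂ) * Complex.I) * (c:ℂ) := by
      rw [map_mul, Complex.conj_ofReal, ← sub_mul, exp_sub_conj]
    rw [e2]
    have hkey := key18 p q hpar hn ε δ 1 hε hδ ((q:ℤ) - 1) (Or.inl ⟨rfl, rfl⟩)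
    have hθ3 : θ = π * (((q:ℤ) - 1 : ℤ) : ℝ) / 2 := by
      rw [hθ]; push_cast; ring
    rw [← hθ3] at hkey
    rw [show ((δ:ℝ):ℂ) * ((Real.Gamma ((((p:ℝ)+(q:ℝ)-2) - 1 + ε) / 4) : ℂ) /
          (2 * (π:ℂ) * Complex.I)) * ((2 * (Real.sin θ : ℂ) * Complex.I) * (c:ℂ))
        = ((δ * Real.Gamma ((((p:ℝ)+(q:ℝ)-2) - 1 + ε) / 4) * Real.sin θ * c / π : ℝ) : ℂ) from by
      push_cast
      have h2 : (Real.pi : ℂ) ≠ 0 := by exact_mod_cast hπ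
      field_simp]
    rw [Complex.ofReal_inj]
    calc c * 1 / Real.Gamma ((5 - ((p:ℝ)+(q:ℝ)-2) - ε) / 4)
        = c * ((1:ℝ) / Real.Gamma ((5 - ((p:ℝ)+(q:ℝ)-2) - ε) / 4)) := by ring
      _ = _ := by rw [hkey]; ring

end
end
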